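/- arXiv:1009.3502 — 9 statements merged into one kernel-verified Lean document; each statement's English description precedes it below -/
import Mathlib

section
/- A finite simple graph G is an interval graph if and only if G has a clique ordering. -/
variable {V : Type*}

/-- `Q` is a maximal clique of the simple graph `G`. -/
def IsMaxClique (G : SimpleGraph V) (Q : Finset V) : Prop :=
  G.IsClique (Q : Set V) ∧
    ∀ R : Finset V, G.IsClique (R : Set V) → Q ⊆ R → Q = R

/-- `S` is a clique ordering of `G`: a finite sequence of (possibly empty) cliques
containing every maximal clique, in which the indices of cliques containing any
fixed vertex are consecutive. -/
def IsCliqueOrdering (G : SimpleGraph V) (S : List (Finset V)) : Prop :=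
  (∀ Q ∈ S, G.IsClique (Q : Set V)) ∧
  (∀ Q : Finset V, IsMaxClique G Q → Q ∈ S) ∧
  (∀ v : V, ∀ i j k : ℕ, i ≤ j → j ≤ k → k < S.length →
    v ∈ S.getD i ∅ → v ∈ S.getD k ∅ → v ∈ S.getD j ∅)

/-- `G` is an interval graph: each vertex gets a nonempty closed real interval,
and two distinct vertices are adjacent iff their intervals intersect. -/
def IsIntervalGraph (G : SimpleGraph V) : Prop :=
  ∃ a b : V → ℝ, (∀ v, a v ≤ b v) ∧
    ∀ u v : V, u ≠ v →
      (G.Adj u v ↔ (Set.Icc (a u) (b u) ∩ Set.Icc (a v) (b v)).Nonempty)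

/-!
Given an interval model, list the sets of intervals through the left endpoints, from left to
right. By the Helly property every maximal clique is one of them, and an interval containing two
points contains every point in between, which gives consecutiveness.

Conversely, in a clique ordering the indices of the cliques containing a vertex `v` form an
integer interval `[first v, last v]`. Two adjacent vertices lie in a common maximal clique, so
their index intervals meet; if two index intervals meet, the clique at `max (first u) (first v)`
contains both vertices, so they are adjacent.
-/

open Set

/-- The third clause of `IsCliqueOrdering`. -/
def IsConsecutive (S : List (Finset V)) : Prop :=
  ∀ v : V, ∀ i j k : ℕ, i ≤ j → j ≤ k → k < S.length →
    v ∈ S.getD i ∅ → v ∈ S.getD k ∅ → v ∈ S.getD j ∅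

theorem IsConsecutive.cons_empty {S : List (Finset V)} (hS : IsConsecutive S) :
    IsConsecutive (∅ :: S) := by
  intro v i j k hij hjk hk hvi hvk
  rcases i with _ | i
  · simp at hvi
  rcases j with _ | j
  · omega
  rcases k with _ | k
  · omega
  simp only [List.getD_cons_succ, List.length_cons] at hk hvi hvk ⊢
  exact hS v i j k (by omega) (by omega) (by omega) hvi hvk

theorem exists_isMaxClique_superset [Finite V] {G : SimpleGraph V} {C : Finset V}
    (hC : G.IsClique (C : Set V)) : ∃ Q, IsMaxClique G Q ∧ C ⊆ Q := by
  obtain ⟨Q, hCQ, hQ⟩ :=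
    Finite.exists_le_maximal (p := fun Q : Finset V => G.IsClique (Q : Set V)) hC
  exact ⟨Q, ⟨hQ.prop, fun R hR hQR => le_antisymm hQR (hQ.2 hR hQR)⟩, hCQ⟩

theorem nonempty_Icc_inter_Icc_natCast {α : Type*} [Semiring α] [LinearOrder α]
    [IsStrictOrderedRing α] {a b c d : ℕ} :
    (Icc (a : α) b ∩ Icc (c : α) d).Nonempty ↔ a ⊔ c ≤ b ⊓ d := by
  rw [Icc_inter_Icc, nonempty_Icc]
  norm_cast

section IntervalModel

variable {G : SimpleGraph V} {a b : V → ℝ}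

noncomputable def pointClique [Finite V] (a b : V → ℝ) (x : ℝ) : Finset V :=
  (toFinite {v | x ∈ Icc (a v) (b v)}).toFinset

variable [Finite V]

@[simp]
theorem mem_pointClique {x : ℝ} {v : V} : v ∈ pointClique a b x ↔ x ∈ Icc (a v) (b v) := by
  simp [pointClique]

theorem isClique_pointClique
    (hadj : ∀ u v, u ≠ v → (Icc (a u) (b u) ∩ Icc (a v) (b v)).Nonempty → G.Adj u v)
    (x : ℝ) :
    G.IsClique (pointClique a b x : Set V) := fun u hu v hv huv =>
  hadj u v huv ⟨x, mem_pointClique.1 hu, mem_pointClique.1 hv⟩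

/-- Helly property of intervals: pairwise intersecting intervals all contain the largest left
endpoint. -/
theorem subset_pointClique_of_isClique (hab : ∀ v, a v ≤ b v)
    (hadj : ∀ u v, G.Adj u v → (Icc (a u) (b u) ∩ Icc (a v) (b v)).Nonempty)
    {Q : Finset V} (hQ : G.IsClique (Q : Set V)) {w : V} (hw : w ∈ Q)
    (hmax : ∀ u ∈ Q, a u ≤ a w) : Q ⊆ pointClique a b (a w) := by
  intro u hu
  refine mem_pointClique.2 ⟨hmax u hu, ?_⟩
  rcases eq_or_ne u w with rfl | huw
  · exact hab u
  · obtain ⟨x, ⟨-, hxu⟩, ⟨hwx, -⟩⟩ := hadj u w (hQ hu hw huw)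
    exact hwx.trans hxu

theorem isConsecutive_map_pointClique {L : List ℝ} (hL : L.SortedLE) :
    IsConsecutive (L.map (pointClique a b)) := by
  intro v i j k hij hjk hk hvi hvk
  simp only [List.length_map] at hk
  rw [List.getD_eq_getElem _ _ (by simp; omega), List.getElem_map, mem_pointClique] at hvi hvk ⊢
  exact ordConnected_Icc.out hvi hvk
    ⟨hL.getElem_le_getElem_of_le hij, hL.getElem_le_getElem_of_le hjk⟩

end IntervalModel

theorem IsIntervalGraph.exists_cliqueOrdering [Fintype V] {G : SimpleGraph V}
    (hG : IsIntervalGraph G) : ∃ S, IsCliqueOrdering G S := by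
  obtain ⟨a, b, hab, hiff⟩ := hG
  have hclique : ∀ x, G.IsClique (pointClique a b x : Set V) :=
    isClique_pointClique fun u v huv => (hiff u v huv).2
  have hadj : ∀ u v, G.Adj u v → (Icc (a u) (b u) ∩ Icc (a v) (b v)).Nonempty :=
    fun u v h => (hiff u v h.ne).1 h
  let L := (Finset.univ.image a).sort
  -- `∅` is needed only when `V` is empty, where it is the unique maximal clique.
  refine ⟨∅ :: L.map (pointClique a b), ?_, ?_,
    (isConsecutive_map_pointClique (Finset.sortedLT_sort _).sortedLE).cons_empty⟩
  · simp only [List.mem_cons, List.mem_map]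
    rintro Q (rfl | ⟨x, -, rfl⟩)
    · simp
    · exact hclique x
  · intro Q hQ
    rcases Q.eq_empty_or_nonempty with rfl | hne
    · exact List.mem_cons_self
    obtain ⟨w, hw, hmax⟩ := Q.exists_max_image a hne
    have hQw : Q = pointClique a b (a w) :=
      hQ.2 _ (hclique _) (subset_pointClique_of_isClique hab hadj hQ.1 hw hmax)
    exact List.mem_cons_of_mem _ (List.mem_map.2 ⟨a w, by simp [L], hQw.symm⟩)

section CliqueOrdering

variable {G : SimpleGraph V} {S : List (Finset V)}

def cliqueIndices [DecidableEq V] (S : List (Finset V)) (v : V) : Finset ℕ :=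
  (Finset.range S.length).filter fun i => v ∈ S.getD i ∅

theorem mem_cliqueIndices [DecidableEq V] {v : V} {i : ℕ} :
    i ∈ cliqueIndices S v ↔ i < S.length ∧ v ∈ S.getD i ∅ := by
  simp [cliqueIndices]

theorem IsConsecutive.mem_getD_of_mem_Icc [DecidableEq V] (hS : IsConsecutive S) {v : V}
    (hv : (cliqueIndices S v).Nonempty) {j : ℕ}
    (hj : j ∈ Icc ((cliqueIndices S v).min' hv) ((cliqueIndices S v).max' hv)) :
    v ∈ S.getD j ∅ :=
  have hmin := mem_cliqueIndices.1 ((cliqueIndices S v).min'_mem hv)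
  have hmax := mem_cliqueIndices.1 ((cliqueIndices S v).max'_mem hv)
  hS v _ j _ hj.1 hj.2 hmax.1 hmin.2 hmax.2

variable [Finite V]

theorem IsCliqueOrdering.exists_subset_getD (hS : IsCliqueOrdering G S) {C : Finset V}
    (hC : G.IsClique (C : Set V)) : ∃ i < S.length, C ⊆ S.getD i ∅ := by
  obtain ⟨Q, hQ, hCQ⟩ := exists_isMaxClique_superset hC
  obtain ⟨i, hi, rfl⟩ := List.getElem_of_mem (hS.2.1 Q hQ)
  exact ⟨i, hi, by rwa [List.getD_eq_getElem _ _ hi]⟩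

variable [DecidableEq V]

theorem IsCliqueOrdering.cliqueIndices_nonempty (hS : IsCliqueOrdering G S) (v : V) :
    (cliqueIndices S v).Nonempty := by
  obtain ⟨i, hi, hvi⟩ := hS.exists_subset_getD (C := {v}) (by simp)
  exact ⟨i, mem_cliqueIndices.2 ⟨hi, hvi (Finset.mem_singleton_self v)⟩⟩

theorem IsCliqueOrdering.adj_iff (hS : IsCliqueOrdering G S) {u v : V} (huv : u ≠ v) :
    G.Adj u v ↔
      (cliqueIndices S u).min' (hS.cliqueIndices_nonempty u) ⊔
          (cliqueIndices S v).min' (hS.cliqueIndices_nonempty v) ≤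
        (cliqueIndices S u).max' (hS.cliqueIndices_nonempty u) ⊓
          (cliqueIndices S v).max' (hS.cliqueIndices_nonempty v) := by
  constructor
  · intro h
    obtain ⟨i, hi, hsub⟩ := hS.exists_subset_getD (C := {u, v}) (by simpa using fun _ => h)
    have hu : i ∈ cliqueIndices S u := mem_cliqueIndices.2 ⟨hi, hsub (by simp)⟩
    have hv : i ∈ cliqueIndices S v := mem_cliqueIndices.2 ⟨hi, hsub (by simp)⟩
    exact sup_le
      (le_inf ((Finset.min'_le _ _ hu).trans (Finset.le_max' _ _ hu))
        ((Finset.min'_le _ _ hu).trans (Finset.le_max' _ _ hv)))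
      (le_inf ((Finset.min'_le _ _ hv).trans (Finset.le_max' _ _ hu))
        ((Finset.min'_le _ _ hv).trans (Finset.le_max' _ _ hv)))
  · intro h
    set j := (cliqueIndices S u).min' (hS.cliqueIndices_nonempty u) ⊔
      (cliqueIndices S v).min' (hS.cliqueIndices_nonempty v)
    have hju := IsConsecutive.mem_getD_of_mem_Icc hS.2.2 (hS.cliqueIndices_nonempty u) (j := j)
      ⟨le_sup_left, h.trans inf_le_left⟩
    have hjv := IsConsecutive.mem_getD_of_mem_Icc hS.2.2 (hS.cliqueIndices_nonempty v) (j := j)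
      ⟨le_sup_right, h.trans inf_le_right⟩
    have hj : j < S.length := (h.trans inf_le_left).trans_lt
      (mem_cliqueIndices.1 (Finset.max'_mem _ _)).1
    rw [List.getD_eq_getElem _ _ hj] at hju hjv
    exact hS.1 _ (List.getElem_mem hj) hju hjv huv

end CliqueOrdering

theorem IsCliqueOrdering.isIntervalGraph [Finite V] {G : SimpleGraph V} {S : List (Finset V)}
    (hS : IsCliqueOrdering G S) : IsIntervalGraph G := by
  classical
  refine ⟨fun v => (cliqueIndices S v).min' (hS.cliqueIndices_nonempty v),
    fun v => (cliqueIndices S v).max' (hS.cliqueIndices_nonempty v),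
    fun _ => Nat.cast_le.2 (Finset.min'_le_max' _ _), fun u v huv => ?_⟩
  rw [nonempty_Icc_inter_Icc_natCast]
  exact hS.adj_iff huv

/-- A finite simple graph is an interval graph iff it has a clique ordering. -/
theorem interval_iff_cliqueOrdering {V : Type*} [Fintype V] (G : SimpleGraph V) :
    IsIntervalGraph G ↔ ∃ S : List (Finset V), IsCliqueOrdering G S :=
  ⟨IsIntervalGraph.exists_cliqueOrdering, fun ⟨_, hS⟩ => hS.isIntervalGraph⟩
end

section
/- Let S = Q_1, …, Q_l be a clique ordering of a finite simple graph G and let Q_a and Q_b (with a < b) be consecutive maximal cliques in S, i.e., Q_a and Q_b are maximal cliques of G and no Q_c with a < c < b is a maximal clique of G. Then every clique Q_c with a < c < b satisfies Q_c ⊆ Q_a or Q_c ⊆ Q_b. -/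
variable {V : Type*}

/-- Between two consecutive maximal cliques of a clique ordering, every clique
is contained in one of the two. -/
theorem between_subset_left_or_right {V : Type*} [Fintype V]
    (G : SimpleGraph V) (S : List (Finset V)) (hS : IsCliqueOrdering G S)
    (a b : ℕ) (hab : a < b) (hb : b < S.length)
    (ha : IsMaxClique G (S.getD a ∅)) (hbm : IsMaxClique G (S.getD b ∅))
    (hmid : ∀ c : ℕ, a < c → c < b → ¬ IsMaxClique G (S.getD c ∅)) :
    ∀ c : ℕ, a < c → c < b → S.getD c ∅ ⊆ S.getD a ∅ ∨ S.getD c ∅ ⊆ S.getD b ∅ := by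
  classical
  obtain ⟨hcl, hmax, hconsec⟩ := hS
  intro c hac hcb
  have hcS : S.getD c ∅ ∈ S ∨ S.getD c ∅ = ∅ := by
    by_cases h : c < S.length
    · left
      rw [List.getD_eq_getElem _ _ h]
      exact List.getElem_mem h
    · right
      exact List.getD_eq_default _ _ (le_of_not_gt h)
  have hQc : G.IsClique ((S.getD c ∅ : Finset V) : Set V) := by
    rcases hcS with h | h
    · exact hcl _ h
    · rw [h]; simp
  -- extend S.getD c ∅ to a maximal clique
  set Q := S.getD c ∅ with hQ
  have : ∃ M : Finset V, IsMaxClique G M ∧ Q ⊆ M := by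
    let s : Finset (Finset V) := Finset.univ.filter (fun R => G.IsClique (R : Set V) ∧ Q ⊆ R)
    have hne : s.Nonempty := ⟨Q, by simp [s, hQc]⟩
    obtain ⟨M, hMs, hMmax⟩ := s.exists_max_image (fun R => R.card) hne
    simp only [s, Finset.mem_filter, Finset.mem_univ, true_and] at hMs hMmax
    refine ⟨M, ⟨hMs.1, ?_⟩, hMs.2⟩
    intro R hR hMR
    exact Finset.eq_of_subset_of_card_le hMR
      (hMmax R ⟨hR, hMs.2.trans hMR⟩)
  obtain ⟨M, hM, hQM⟩ := this
  have hMS : M ∈ S := hmax M hM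
  obtain ⟨d, hd, hdM⟩ := List.mem_iff_getElem.mp hMS
  have hdM' : S.getD d ∅ = M := by rw [List.getD_eq_getElem _ _ hd, hdM]
  rcases lt_or_ge d b with hdb | hdb
  · rcases le_or_gt d a with hda | hda
    · -- d ≤ a < c : Q ⊆ S.getD a ∅
      left
      intro v hv
      exact hconsec v d a c hda (le_of_lt hac)
        (lt_trans hcb hb) (hdM' ▸ hQM hv) hv
    · exact absurd (hdM' ▸ hM) (hmid d hda hdb)
  · -- c < b ≤ d : Q ⊆ S.getD b ∅
    right
    intro v hv
    exact hconsec v c b d (le_of_lt hcb) hdb hd hv (hdM' ▸ hQM hv)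
end

section
/- Let S = Q_1, …, Q_l be a clique ordering of a finite simple graph G and let Q_a and Q_b (with a < b) be consecutive maximal cliques in S. Then: (i) for all indices c, d with a < c ≤ d < b, if Q_c ⊆ Q_a and Q_d ⊆ Q_a then Q_d ⊆ Q_c (the right tail of Q_a is decreasing under inclusion); (ii) for all indices c, d with a < c ≤ d < b, if Q_c ⊆ Q_b and Q_d ⊆ Q_b then Q_c ⊆ Q_d (the left tail of Q_b is increasing under inclusion); (iii) there is no pair of indices c < d strictly between a and b with Q_c ⊆ Q_b, Q_c ⊄ Q_a, Q_d ⊆ Q_a and Q_d ⊄ Q_b, i.e., the cliques that are subsets of Q_a only precede the cliques that are subsets of Q_b only. -/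
variable {V : Type*}

/-- Between two consecutive maximal cliques `Q_a` and `Q_b` of a clique ordering:
the right tail of `Q_a` is decreasing, the left tail of `Q_b` is increasing,
and the subsets of `Q_a` (only) precede the subsets of `Q_b` (only). -/
theorem tails_monotone {V : Type*} [Fintype V]
    (G : SimpleGraph V) (S : List (Finset V)) (hS : IsCliqueOrdering G S)
    (a b : ℕ) (hab : a < b) (hb : b < S.length)
    (ha : IsMaxClique G (S.getD a ∅)) (hbm : IsMaxClique G (S.getD b ∅))
    (hmid : ∀ c : ℕ, a < c → c < b → ¬ IsMaxClique G (S.getD c ∅)) :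
    (∀ c d : ℕ, a < c → c ≤ d → d < b →
      S.getD c ∅ ⊆ S.getD a ∅ → S.getD d ∅ ⊆ S.getD a ∅ →
      S.getD d ∅ ⊆ S.getD c ∅) ∧
    (∀ c d : ℕ, a < c → c ≤ d → d < b →
      S.getD c ∅ ⊆ S.getD b ∅ → S.getD d ∅ ⊆ S.getD b ∅ →
      S.getD c ∅ ⊆ S.getD d ∅) ∧
    ¬ ∃ c d : ℕ, a < c ∧ c < d ∧ d < b ∧
      S.getD c ∅ ⊆ S.getD b ∅ ∧ ¬ S.getD c ∅ ⊆ S.getD a ∅ ∧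
      S.getD d ∅ ⊆ S.getD a ∅ ∧ ¬ S.getD d ∅ ⊆ S.getD b ∅ := by
  obtain ⟨-, -, P⟩ := hS
  refine ⟨?_, ?_, ?_⟩
  · intro c d hac hcd hdb hca hda v hv
    exact P v a c d hac.le hcd (hdb.trans hb) (hda hv) hv
  · intro c d hac hcd hdb hcb hdbb v hv
    exact P v c d b hcd hdb.le hb hv (hcb hv)
  · rintro ⟨c, d, hac, hcd, hdb, hcb, hnca, hda, -⟩
    apply hnca
    intro v hv
    exact hda (P v c d b hcd.le hdb.le hb hv (hcb hv))
end

section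
/- Let G be a finite simple graph with clique ordering Q_1, …, Q_l and let W be a subset of the vertex set of G. Then the sequence Q_1 ∩ W, …, Q_l ∩ W is a clique ordering of the induced subgraph G[W]. -/
variable {V : Type*}

instance {V : Type*} [DecidableEq V] (W : Finset V) :
    DecidablePred (fun x : V => x ∈ (↑W : Set V)) :=
  fun x => decidable_of_iff (x ∈ W) (by simp)

/-- Every clique extends to a maximal clique (finite vertex set). -/
lemma exists_maxClique_superset {V : Type*} [Fintype V] [DecidableEq V]
    (G : SimpleGraph V) (R : Finset V) (hR : G.IsClique (R : Set V)) :
    ∃ M : Finset V, IsMaxClique G M ∧ R ⊆ M := by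
  classical
  let s : Finset (Finset V) :=
    Finset.univ.filter (fun T => G.IsClique (T : Set V) ∧ R ⊆ T)
  have hRs : R ∈ s := by simp [s, hR]
  obtain ⟨M, hMs, hmax⟩ := s.exists_max_image (fun T => T.card) ⟨R, hRs⟩
  simp only [s, Finset.mem_filter, Finset.mem_univ, true_and] at hMs
  refine ⟨M, ⟨hMs.1, ?_⟩, hMs.2⟩
  intro T hT hMT
  have hTs : T ∈ s := by
    simp only [s, Finset.mem_filter, Finset.mem_univ, true_and]
    exact ⟨hT, hMs.2.trans hMT⟩
  exact Finset.eq_of_subset_of_card_le hMT (hmax T hTs)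

/-- Restricting a clique ordering of `G` to a vertex subset `W` gives a clique
ordering of the induced subgraph `G[W]`. -/
theorem cliqueOrdering_restrict {V : Type*} [Fintype V] [DecidableEq V]
    (G : SimpleGraph V) (S : List (Finset V)) (W : Finset V)
    (hS : IsCliqueOrdering G S) :
    IsCliqueOrdering (G.induce (↑W : Set V))
      (S.map fun Q => (Q ∩ W).subtype (fun x => x ∈ (↑W : Set V))) := by
  classical
  obtain ⟨h1, h2, h3⟩ := hS
  set f : Finset V → Finset (↑(↑W : Set V)) :=
    fun Q => (Q ∩ W).subtype (fun x => x ∈ (↑W : Set V)) with hf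
  have hfmem : ∀ (Q : Finset V) (x : ↑(↑W : Set V)), x ∈ f Q ↔ (x : V) ∈ Q := by
    intro Q x
    simp only [f, Finset.mem_subtype, Finset.mem_inter]
    exact ⟨fun h => h.1, fun h => ⟨h, x.2⟩⟩
  have hfclique : ∀ Q : Finset V, G.IsClique (Q : Set V) →
      (G.induce (↑W : Set V)).IsClique ((f Q : Set ↑(↑W : Set V))) := by
    intro Q hQ a ha b hb hab
    rw [Finset.mem_coe, hfmem] at ha hb
    exact hQ ha hb (fun h => hab (Subtype.ext h))
  refine ⟨?_, ?_, ?_⟩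
  · intro Q hQ
    rw [List.mem_map] at hQ
    obtain ⟨P, hP, rfl⟩ := hQ
    exact hfclique P (h1 P hP)
  · rintro Q ⟨hQc, hQmax⟩
    -- push Q to V
    set R : Finset V := Q.map (Function.Embedding.subtype _) with hR
    have hRW : ∀ x ∈ R, x ∈ W := by
      intro x hx
      rw [hR, Finset.mem_map] at hx
      obtain ⟨y, _, rfl⟩ := hx
      exact y.2
    have hRclique : G.IsClique (R : Set V) := by
      intro a ha b hb hab
      rw [Finset.mem_coe, hR, Finset.mem_map] at ha hb
      obtain ⟨x, hx, rfl⟩ := ha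
      obtain ⟨y, hy, rfl⟩ := hb
      exact hQc hx hy (fun h => hab (congrArg _ h))
    obtain ⟨M, hM, hRM⟩ := exists_maxClique_superset G R hRclique
    have hMS : M ∈ S := h2 M hM
    have : Q = f M := by
      apply hQmax
      · exact hfclique M hM.1
      · intro x hx
        rw [hfmem]
        apply hRM
        rw [hR, Finset.mem_map]
        exact ⟨x, hx, rfl⟩
    rw [this, List.mem_map]
    exact ⟨M, hMS, rfl⟩
  · intro v i j k hij hjk hk
    rw [List.length_map] at hk
    have hgd : ∀ m : ℕ, (S.map f).getD m ∅ = f (S.getD m ∅) := by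
      intro m
      by_cases hm : m < S.length
      · rw [List.getD_eq_getElem _ _ (by rw [List.length_map]; exact hm),
          List.getD_eq_getElem _ _ hm, List.getElem_map]
      · rw [List.getD_eq_default _ _ (by rw [List.length_map]; omega),
          List.getD_eq_default _ _ (by omega)]
        ext x; simp [f]
    rw [hgd, hgd, hgd, hfmem, hfmem, hfmem]
    exact fun hi hkk => h3 v i j k hij hjk hk hi hkk
end

section
/- Let G_1 and G_2 be finite simple graphs sharing the vertex set I = V(G_1) ∩ V(G_2) and the edges induced by I. Suppose there exist clique orderings O_1 = Q_1, …, Q_l of G_1 and O_2 = Q'_1, …, Q'_l of G_2 of the same length such that for every vertex v ∈ I and every index i, v ∈ Q_i if and only if v ∈ Q'_i. Then G_1 and G_2 are simultaneous interval graphs. -/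
variable {U : Type*}

/-- `Q` is a maximal clique of `G` among the cliques contained in the
vertex set `W`; i.e. a maximal clique of the induced subgraph `G[W]`. -/
def IsMaxCliqueOn (G : SimpleGraph U) (W : Finset U) (Q : Finset U) : Prop :=
  Q ⊆ W ∧ G.IsClique (Q : Set U) ∧
    ∀ R : Finset U, R ⊆ W → G.IsClique (R : Set U) → Q ⊆ R → Q = R

/-- `S` is a clique ordering of the graph `G` regarded as a graph on the vertex
set `W`: a finite sequence of (possibly empty) cliques contained in `W`,
containing every maximal clique of `G[W]`, in which the indices of cliques
containing any fixed vertex are consecutive. -/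
def IsCliqueOrderingOn (G : SimpleGraph U) (W : Finset U) (S : List (Finset U)) : Prop :=
  (∀ Q ∈ S, Q ⊆ W ∧ G.IsClique (Q : Set U)) ∧
  (∀ Q : Finset U, IsMaxCliqueOn G W Q → Q ∈ S) ∧
  (∀ v : U, ∀ i j k : ℕ, i ≤ j → j ≤ k → k < S.length →
    v ∈ S.getD i ∅ → v ∈ S.getD k ∅ → v ∈ S.getD j ∅)

/-- `G1` (on vertex set `V1`) and `G2` (on vertex set `V2`) are simultaneous
interval graphs: they admit interval representations (by nonempty closed real
intervals, adjacency iff intersecting) that assign the same interval to every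
vertex of `I = V1 ∩ V2`. -/
def SimultaneousIntervalGraphs [DecidableEq U] (V1 V2 : Finset U) (G1 G2 : SimpleGraph U) : Prop :=
  ∃ a1 b1 a2 b2 : U → ℝ,
    (∀ v ∈ V1, a1 v ≤ b1 v) ∧ (∀ v ∈ V2, a2 v ≤ b2 v) ∧
    (∀ u ∈ V1, ∀ v ∈ V1, u ≠ v →
      (G1.Adj u v ↔ (Set.Icc (a1 u) (b1 u) ∩ Set.Icc (a1 v) (b1 v)).Nonempty)) ∧
    (∀ u ∈ V2, ∀ v ∈ V2, u ≠ v →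
      (G2.Adj u v ↔ (Set.Icc (a2 u) (b2 u) ∩ Set.Icc (a2 v) (b2 v)).Nonempty)) ∧
    (∀ v ∈ V1 ∩ V2, a1 v = a2 v ∧ b1 v = b2 v)


private def idxSet [DecidableEq U] (O : List (Finset U)) (v : U) : Finset ℕ :=
  (Finset.range O.length).filter (fun i => v ∈ O.getD i ∅)

private lemma mem_idxSet [DecidableEq U] {O : List (Finset U)} {v : U} {i : ℕ} :
    i ∈ idxSet O v ↔ i < O.length ∧ v ∈ O.getD i ∅ := by
  simp [idxSet]

private lemma exists_maxCliqueOn [Fintype U] [DecidableEq U] (G : SimpleGraph U)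
    (W R : Finset U) (hRW : R ⊆ W) (hR : G.IsClique (R : Set U)) :
    ∃ Q : Finset U, R ⊆ Q ∧ IsMaxCliqueOn G W Q := by
  classical
  set s := W.powerset.filter (fun Q : Finset U => G.IsClique (Q : Set U) ∧ R ⊆ Q) with hs
  have hRs : R ∈ s := by simp [hs, hRW, hR]
  obtain ⟨Q, hQs, hmax⟩ := s.exists_max_image Finset.card ⟨R, hRs⟩
  simp only [hs, Finset.mem_filter, Finset.mem_powerset] at hQs
  refine ⟨Q, hQs.2.2, hQs.1, hQs.2.1, ?_⟩
  intro R' hR'W hR'c hQR'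
  have hR's : R' ∈ s := by
    simp only [hs, Finset.mem_filter, Finset.mem_powerset]
    exact ⟨hR'W, hR'c, hQs.2.2.trans hQR'⟩
  exact Finset.eq_of_subset_of_card_le hQR' (hmax R' hR's)

private lemma idx_nonempty [Fintype U] [DecidableEq U] {G : SimpleGraph U} {W : Finset U}
    {O : List (Finset U)} (h : IsCliqueOrderingOn G W O) {v : U} (hv : v ∈ W) :
    (idxSet O v).Nonempty := by
  obtain ⟨Q, hvQ, hQmax⟩ := exists_maxCliqueOn G W {v} (by simpa) (by simp)
  have hQO : Q ∈ O := h.2.1 Q hQmax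
  obtain ⟨i, hi, hQi⟩ := List.mem_iff_getElem.mp hQO
  refine ⟨i, mem_idxSet.mpr ⟨hi, ?_⟩⟩
  rw [List.getD_eq_getElem _ _ hi, hQi]
  exact hvQ (Finset.mem_singleton_self v)

private lemma adj_common [Fintype U] [DecidableEq U] {G : SimpleGraph U} {W : Finset U}
    {O : List (Finset U)} (h : IsCliqueOrderingOn G W O) {u v : U}
    (hu : u ∈ W) (hv : v ∈ W) (hadj : G.Adj u v) :
    ∃ i, i ∈ idxSet O u ∧ i ∈ idxSet O v := by
  have hcl : G.IsClique (({u, v} : Finset U) : Set U) := by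
    simp only [Finset.coe_insert, Finset.coe_singleton]
    exact SimpleGraph.isClique_pair.mpr (fun _ => hadj)
  have hsub : ({u, v} : Finset U) ⊆ W := by
    intro x hx
    rcases Finset.mem_insert.mp hx with rfl | hx
    · exact hu
    · exact (Finset.mem_singleton.mp hx) ▸ hv
  obtain ⟨Q, hsubQ, hQmax⟩ := exists_maxCliqueOn G W {u, v} hsub hcl
  have hQO : Q ∈ O := h.2.1 Q hQmax
  obtain ⟨i, hi, hQi⟩ := List.mem_iff_getElem.mp hQO
  have hgetD : O.getD i ∅ = Q := by rw [List.getD_eq_getElem _ _ hi, hQi]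
  exact ⟨i, mem_idxSet.mpr ⟨hi, hgetD ▸ hsubQ (by simp)⟩,
    mem_idxSet.mpr ⟨hi, hgetD ▸ hsubQ (by simp)⟩⟩

private lemma adj_of_icc [Fintype U] [DecidableEq U] {G : SimpleGraph U} {W : Finset U}
    {O : List (Finset U)} (h : IsCliqueOrderingOn G W O) {u v : U}
    (hu : (idxSet O u).Nonempty) (hv : (idxSet O v).Nonempty) (hne : u ≠ v)
    (hx : (Set.Icc ((((idxSet O u).min' hu : ℕ)) : ℝ) ((idxSet O u).max' hu) ∩
      Set.Icc (((idxSet O v).min' hv : ℕ) : ℝ) ((idxSet O v).max' hv)).Nonempty) :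
    G.Adj u v := by
  obtain ⟨x, ⟨hxu1, hxu2⟩, hxv1, hxv2⟩ := hx
  have hmuMv : (idxSet O u).min' hu ≤ (idxSet O v).max' hv := by
    exact_mod_cast hxu1.trans hxv2
  have hmvMu : (idxSet O v).min' hv ≤ (idxSet O u).max' hu := by
    exact_mod_cast hxv1.trans hxu2
  set j := max ((idxSet O u).min' hu) ((idxSet O v).min' hv) with hj
  have hjMu : j ≤ (idxSet O u).max' hu := max_le (Finset.min'_le _ _ ((idxSet O u).max'_mem hu)) hmvMu
  have hjMv : j ≤ (idxSet O v).max' hv := max_le hmuMv (Finset.min'_le _ _ ((idxSet O v).max'_mem hv))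
  have hMu := mem_idxSet.mp ((idxSet O u).max'_mem hu)
  have hmu := mem_idxSet.mp ((idxSet O u).min'_mem hu)
  have hMv := mem_idxSet.mp ((idxSet O v).max'_mem hv)
  have hmv := mem_idxSet.mp ((idxSet O v).min'_mem hv)
  have hjlen : j < O.length := lt_of_le_of_lt hjMu hMu.1
  have huj : u ∈ O.getD j ∅ :=
    h.2.2 u _ j _ (le_max_left _ _) hjMu hMu.1 hmu.2 hMu.2
  have hvj : v ∈ O.getD j ∅ :=
    h.2.2 v _ j _ (le_max_right _ _) hjMv hMv.1 hmv.2 hMv.2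
  have hQO : O.getD j ∅ ∈ O := by
    rw [List.getD_eq_getElem _ _ hjlen]; exact List.getElem_mem hjlen
  exact (h.1 _ hQO).2 huj hvj hne

/-- If two graphs sharing the vertex set `I = V1 ∩ V2` (and its induced edges)
admit clique orderings of the same length that agree on `I` position-wise,
then they are simultaneous interval graphs. -/
theorem simultaneous_of_agreeing_orderings {U : Type*} [Fintype U] [DecidableEq U]
    (V1 V2 : Finset U) (G1 G2 : SimpleGraph U)
    (hG1 : ∀ u v : U, G1.Adj u v → u ∈ V1 ∧ v ∈ V1)
    (hG2 : ∀ u v : U, G2.Adj u v → u ∈ V2 ∧ v ∈ V2)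
    (hI : ∀ u ∈ V1 ∩ V2, ∀ v ∈ V1 ∩ V2, G1.Adj u v ↔ G2.Adj u v)
    (O1 O2 : List (Finset U))
    (h1 : IsCliqueOrderingOn G1 V1 O1) (h2 : IsCliqueOrderingOn G2 V2 O2)
    (hlen : O1.length = O2.length)
    (hagree : ∀ v ∈ V1 ∩ V2, ∀ i : ℕ, i < O1.length →
      (v ∈ O1.getD i ∅ ↔ v ∈ O2.getD i ∅)) :
    SimultaneousIntervalGraphs V1 V2 G1 G2 := by
  classical
  set a1 : U → ℝ := fun v => if h : (idxSet O1 v).Nonempty then ((idxSet O1 v).min' h : ℕ) else 0 with ha1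
  set b1 : U → ℝ := fun v => if h : (idxSet O1 v).Nonempty then ((idxSet O1 v).max' h : ℕ) else 0 with hb1
  set a2 : U → ℝ := fun v => if h : (idxSet O2 v).Nonempty then ((idxSet O2 v).min' h : ℕ) else 0 with ha2
  set b2 : U → ℝ := fun v => if h : (idxSet O2 v).Nonempty then ((idxSet O2 v).max' h : ℕ) else 0 with hb2
  have hidxeq : ∀ v ∈ V1 ∩ V2, idxSet O1 v = idxSet O2 v := by
    intro v hv
    ext i
    simp only [mem_idxSet]
    constructor
    · rintro ⟨hi, hmem⟩
      exact ⟨hlen ▸ hi, (hagree v hv i hi).mp hmem⟩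
    · rintro ⟨hi, hmem⟩
      have hi' : i < O1.length := hlen ▸ hi
      exact ⟨hi', (hagree v hv i hi').mpr hmem⟩
  refine ⟨a1, b1, a2, b2, ?_, ?_, ?_, ?_, ?_⟩
  · intro v hv
    have h := idx_nonempty h1 hv
    simp only [ha1, hb1, dif_pos h]
    exact_mod_cast Finset.min'_le _ _ ((idxSet O1 v).max'_mem h)
  · intro v hv
    have h := idx_nonempty h2 hv
    simp only [ha2, hb2, dif_pos h]
    exact_mod_cast Finset.min'_le _ _ ((idxSet O2 v).max'_mem h)
  · intro u hu v hv hne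
    have hnu := idx_nonempty h1 hu
    have hnv := idx_nonempty h1 hv
    simp only [ha1, hb1, dif_pos hnu, dif_pos hnv]
    constructor
    · intro hadj
      obtain ⟨i, hiu, hiv⟩ := adj_common h1 hu hv hadj
      refine ⟨(i : ℝ), ⟨?_, ?_⟩, ?_, ?_⟩ <;>
        exact_mod_cast (by first
          | exact Finset.min'_le _ _ hiu | exact Finset.le_max' _ _ hiu
          | exact Finset.min'_le _ _ hiv | exact Finset.le_max' _ _ hiv)
    · exact adj_of_icc h1 hnu hnv hne
  · intro u hu v hv hne
    have hnu := idx_nonempty h2 hu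
    have hnv := idx_nonempty h2 hv
    simp only [ha2, hb2, dif_pos hnu, dif_pos hnv]
    constructor
    · intro hadj
      obtain ⟨i, hiu, hiv⟩ := adj_common h2 hu hv hadj
      refine ⟨(i : ℝ), ⟨?_, ?_⟩, ?_, ?_⟩ <;>
        exact_mod_cast (by first
          | exact Finset.min'_le _ _ hiu | exact Finset.le_max' _ _ hiu
          | exact Finset.min'_le _ _ hiv | exact Finset.le_max' _ _ hiv)
    · exact adj_of_icc h2 hnu hnv hne
  · intro v hv
    have he := hidxeq v hv
    constructor
    · simp only [ha1, ha2, he]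
    · simp only [hb1, hb2, he]
end

section
/- Let G_1 and G_2 be finite simple graphs sharing the vertex set I = V(G_1) ∩ V(G_2) and the edges induced by I. Then G_1 and G_2 are simultaneous interval graphs if and only if there exists a set E' of edges, each joining a vertex of V(G_1) − I to a vertex of V(G_2) − I, such that the graph G_1 ∪ G_2 ∪ E' on the vertex set V(G_1) ∪ V(G_2) is an interval graph. -/
variable {U : Type*}

/-- `G`, regarded as a graph on the vertex set `W`, is an interval graph. -/
def IsIntervalGraphOn (G : SimpleGraph U) (W : Finset U) : Prop :=
  ∃ a b : U → ℝ, (∀ v ∈ W, a v ≤ b v) ∧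
    ∀ u ∈ W, ∀ v ∈ W, u ≠ v →
      (G.Adj u v ↔ (Set.Icc (a u) (b u) ∩ Set.Icc (a v) (b v)).Nonempty)

/-
Both directions only move interval representations around. Representations of `G1` and `G2`
that agree on `I` glue to one family of intervals on `V1 ∪ V2`; its intersection graph contains
`G1` and `G2`, and a new edge between two vertices of `V1` (or of `V2`) is impossible since
those intervals already represent `G1` (or `G2`). Conversely, an interval representation of the
augmented graph restricts to `V1` and to `V2`, where the added edges, which never have both
ends in `V1` or both in `V2`, do not show.
-/

namespace Finset

theorem piecewise_eq_right_of_eqOn_inter {α β : Type*} [DecidableEq α] {s t : Finset α}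
    {f g : α → β} (h : ∀ x ∈ s ∩ t, f x = g x) {x : α} (hx : x ∈ t) :
    s.piecewise f g x = g x := by
  by_cases hs : x ∈ s
  · rw [s.piecewise_eq_of_mem f g hs, h x (mem_inter.mpr ⟨hs, hx⟩)]
  · exact s.piecewise_eq_of_notMem f g hs

theorem mem_sdiff_or_mem_sdiff {α : Type*} [DecidableEq α] {s t : Finset α} {x y : α}
    (hx : x ∈ s ∪ t) (hy : y ∈ s ∪ t) (hs : ¬(x ∈ s ∧ y ∈ s)) (ht : ¬(x ∈ t ∧ y ∈ t)) :
    (x ∈ s \ t ∧ y ∈ t \ s) ∨ (x ∈ t \ s ∧ y ∈ s \ t) := by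
  simp only [mem_union, mem_sdiff] at *
  tauto

end Finset

namespace SimpleGraph

def IsIntervalModelOn (G : SimpleGraph U) (W : Finset U) (a b : U → ℝ) : Prop :=
  (∀ v ∈ W, a v ≤ b v) ∧
    ∀ u ∈ W, ∀ v ∈ W, u ≠ v →
      (G.Adj u v ↔ (Set.Icc (a u) (b u) ∩ Set.Icc (a v) (b v)).Nonempty)

def intervalGraph (W : Finset U) (a b : U → ℝ) : SimpleGraph U where
  Adj u v := u ≠ v ∧ u ∈ W ∧ v ∈ W ∧ (Set.Icc (a u) (b u) ∩ Set.Icc (a v) (b v)).Nonempty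
  symm := ⟨fun _ _ ⟨hne, hu, hv, hmeet⟩ => ⟨hne.symm, hv, hu, by rwa [Set.inter_comm]⟩⟩
  loopless := ⟨fun _ h => h.1 rfl⟩

@[simp]
theorem intervalGraph_adj {W : Finset U} {a b : U → ℝ} {u v : U} :
    (intervalGraph W a b).Adj u v ↔
      u ≠ v ∧ u ∈ W ∧ v ∈ W ∧ (Set.Icc (a u) (b u) ∩ Set.Icc (a v) (b v)).Nonempty :=
  Iff.rfl

theorem isIntervalGraphOn_iff {G : SimpleGraph U} {W : Finset U} :
    IsIntervalGraphOn G W ↔ ∃ a b : U → ℝ, G.IsIntervalModelOn W a b :=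
  Iff.rfl

theorem simultaneousIntervalGraphs_iff [DecidableEq U] {V1 V2 : Finset U}
    {G1 G2 : SimpleGraph U} :
    SimultaneousIntervalGraphs V1 V2 G1 G2 ↔
      ∃ a1 b1 a2 b2 : U → ℝ, G1.IsIntervalModelOn V1 a1 b1 ∧ G2.IsIntervalModelOn V2 a2 b2 ∧
        ∀ v ∈ V1 ∩ V2, a1 v = a2 v ∧ b1 v = b2 v := by
  constructor
  · rintro ⟨a1, b1, a2, b2, hab1, hab2, hadj1, hadj2, hagree⟩
    exact ⟨a1, b1, a2, b2, ⟨hab1, hadj1⟩, ⟨hab2, hadj2⟩, hagree⟩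
  · rintro ⟨a1, b1, a2, b2, ⟨hab1, hadj1⟩, ⟨hab2, hadj2⟩, hagree⟩
    exact ⟨a1, b1, a2, b2, hab1, hab2, hadj1, hadj2, hagree⟩

theorem isIntervalModelOn_intervalGraph {W : Finset U} {a b : U → ℝ}
    (hab : ∀ v ∈ W, a v ≤ b v) : (intervalGraph W a b).IsIntervalModelOn W a b :=
  ⟨hab, fun u hu v hv huv => by simp [huv, hu, hv]⟩

namespace IsIntervalModelOn

variable {G H : SimpleGraph U} {W W' : Finset U} {a b a' b' : U → ℝ}

theorem congr (h : G.IsIntervalModelOn W a b) (ha : ∀ v ∈ W, a v = a' v)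
    (hb : ∀ v ∈ W, b v = b' v) : G.IsIntervalModelOn W a' b' := by
  refine ⟨fun v hv => ha v hv ▸ hb v hv ▸ h.1 v hv, fun u hu v hv huv => ?_⟩
  rw [← ha u hu, ← hb u hu, ← ha v hv, ← hb v hv]
  exact h.2 u hu v hv huv

theorem restrict (h : G.IsIntervalModelOn W a b) (hW : W' ⊆ W)
    (hH : ∀ u ∈ W', ∀ v ∈ W', u ≠ v → (H.Adj u v ↔ G.Adj u v)) :
    H.IsIntervalModelOn W' a b :=
  ⟨fun v hv => h.1 v (hW hv), fun u hu v hv huv =>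
    (hH u hu v hv huv).trans (h.2 u (hW hu) v (hW hv) huv)⟩

theorem adj_iff_of_subset (hG : G.IsIntervalModelOn W a b) (hH : H.IsIntervalModelOn W' a b)
    (hW : W' ⊆ W) {u v : U} (hu : u ∈ W') (hv : v ∈ W') (huv : u ≠ v) :
    H.Adj u v ↔ G.Adj u v :=
  (hH.2 u hu v hv huv).trans (hG.2 u (hW hu) v (hW hv) huv).symm

end IsIntervalModelOn

variable [DecidableEq U] {V1 V2 : Finset U} {G G1 G2 : SimpleGraph U}

theorem exists_isIntervalModelOn_of_agree {a1 b1 a2 b2 : U → ℝ}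
    (h1 : G1.IsIntervalModelOn V1 a1 b1) (h2 : G2.IsIntervalModelOn V2 a2 b2)
    (hagree : ∀ v ∈ V1 ∩ V2, a1 v = a2 v ∧ b1 v = b2 v) :
    ∃ a b : U → ℝ, G1.IsIntervalModelOn V1 a b ∧ G2.IsIntervalModelOn V2 a b :=
  ⟨V1.piecewise a1 a2, V1.piecewise b1 b2,
    h1.congr (fun _ hv => (V1.piecewise_eq_of_mem _ _ hv).symm)
      (fun _ hv => (V1.piecewise_eq_of_mem _ _ hv).symm),
    h2.congr
      (fun _ hv => (Finset.piecewise_eq_right_of_eqOn_inter (fun v hv => (hagree v hv).1) hv).symm)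
      (fun _ hv => (Finset.piecewise_eq_right_of_eqOn_inter (fun v hv => (hagree v hv).2) hv).symm)⟩

theorem exists_augmentation_of_isIntervalModelOn {a b : U → ℝ}
    (hG1 : ∀ u v, G1.Adj u v → u ∈ V1 ∧ v ∈ V1) (hG2 : ∀ u v, G2.Adj u v → u ∈ V2 ∧ v ∈ V2)
    (h1 : G1.IsIntervalModelOn V1 a b) (h2 : G2.IsIntervalModelOn V2 a b) :
    ∃ G : SimpleGraph U,
      (∀ u v, G1.Adj u v → G.Adj u v) ∧ (∀ u v, G2.Adj u v → G.Adj u v) ∧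
      (∀ u v, G.Adj u v → ¬G1.Adj u v → ¬G2.Adj u v →
        (u ∈ V1 \ V2 ∧ v ∈ V2 \ V1) ∨ (u ∈ V2 \ V1 ∧ v ∈ V1 \ V2)) ∧
      IsIntervalGraphOn G (V1 ∪ V2) := by
  have hG : (intervalGraph (V1 ∪ V2) a b).IsIntervalModelOn (V1 ∪ V2) a b :=
    isIntervalModelOn_intervalGraph fun v hv => (Finset.mem_union.mp hv).elim (h1.1 v) (h2.1 v)
  have hG1' {u v : U} := hG.adj_iff_of_subset h1 Finset.subset_union_left (u := u) (v := v)
  have hG2' {u v : U} := hG.adj_iff_of_subset h2 Finset.subset_union_right (u := u) (v := v)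
  refine ⟨intervalGraph (V1 ∪ V2) a b, fun u v h => ?_, fun u v h => ?_, ?_, a, b, hG⟩
  · exact (hG1' (hG1 u v h).1 (hG1 u v h).2 h.ne).mp h
  · exact (hG2' (hG2 u v h).1 (hG2 u v h).2 h.ne).mp h
  · intro u v h hn1 hn2
    obtain ⟨huv, hu, hv, -⟩ := intervalGraph_adj.mp h
    exact Finset.mem_sdiff_or_mem_sdiff hu hv
      (fun ⟨hu1, hv1⟩ => hn1 ((hG1' hu1 hv1 huv).mpr h))
      (fun ⟨hu2, hv2⟩ => hn2 ((hG2' hu2 hv2 huv).mpr h))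

theorem adj_iff_of_augmentation (hG2 : ∀ u v, G2.Adj u v → u ∈ V2 ∧ v ∈ V2)
    (hI : ∀ u ∈ V1 ∩ V2, ∀ v ∈ V1 ∩ V2, G1.Adj u v ↔ G2.Adj u v)
    (h1 : ∀ u v, G1.Adj u v → G.Adj u v)
    (hE : ∀ u v, G.Adj u v → ¬G1.Adj u v → ¬G2.Adj u v →
      (u ∈ V1 \ V2 ∧ v ∈ V2 \ V1) ∨ (u ∈ V2 \ V1 ∧ v ∈ V1 \ V2))
    {u v : U} (hu : u ∈ V1) (hv : v ∈ V1) : G1.Adj u v ↔ G.Adj u v := by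
  refine ⟨h1 u v, fun h => ?_⟩
  by_contra hn1
  by_cases hn2 : G2.Adj u v
  · obtain ⟨hu2, hv2⟩ := hG2 u v hn2
    exact hn1 ((hI u (Finset.mem_inter.mpr ⟨hu, hu2⟩) v (Finset.mem_inter.mpr ⟨hv, hv2⟩)).mpr hn2)
  · rcases hE u v h hn1 hn2 with ⟨-, hv'⟩ | ⟨hu', -⟩
    · exact (Finset.mem_sdiff.mp hv').2 hv
    · exact (Finset.mem_sdiff.mp hu').2 hu

end SimpleGraph

open SimpleGraph

theorem simultaneous_iff_augmentation_general {U : Type*} [DecidableEq U]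
    (V1 V2 : Finset U) (G1 G2 : SimpleGraph U)
    (hG1 : ∀ u v : U, G1.Adj u v → u ∈ V1 ∧ v ∈ V1)
    (hG2 : ∀ u v : U, G2.Adj u v → u ∈ V2 ∧ v ∈ V2)
    (hI : ∀ u ∈ V1 ∩ V2, ∀ v ∈ V1 ∩ V2, G1.Adj u v ↔ G2.Adj u v) :
    SimultaneousIntervalGraphs V1 V2 G1 G2 ↔
      ∃ G : SimpleGraph U,
        (∀ u v : U, G1.Adj u v → G.Adj u v) ∧
        (∀ u v : U, G2.Adj u v → G.Adj u v) ∧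
        (∀ u v : U, G.Adj u v → ¬ G1.Adj u v → ¬ G2.Adj u v →
          (u ∈ V1 \ V2 ∧ v ∈ V2 \ V1) ∨ (u ∈ V2 \ V1 ∧ v ∈ V1 \ V2)) ∧
        IsIntervalGraphOn G (V1 ∪ V2) := by
  constructor
  · intro h
    obtain ⟨a1, b1, a2, b2, h1, h2, hagree⟩ := simultaneousIntervalGraphs_iff.mp h
    obtain ⟨a, b, h1, h2⟩ := exists_isIntervalModelOn_of_agree h1 h2 hagree
    exact exists_augmentation_of_isIntervalModelOn hG1 hG2 h1 h2
  · rintro ⟨G, h1, h2, hE, hint⟩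
    obtain ⟨a, b, hG⟩ := isIntervalGraphOn_iff.mp hint
    have hI' : ∀ u ∈ V2 ∩ V1, ∀ v ∈ V2 ∩ V1, G2.Adj u v ↔ G1.Adj u v := fun u hu v hv =>
      (hI u (Finset.inter_comm V2 V1 ▸ hu) v (Finset.inter_comm V2 V1 ▸ hv)).symm
    exact simultaneousIntervalGraphs_iff.mpr ⟨a, b, a, b,
      hG.restrict Finset.subset_union_left fun u hu v hv _ =>
        adj_iff_of_augmentation hG2 hI h1 hE hu hv,
      hG.restrict Finset.subset_union_right fun u hu v hv _ =>
        adj_iff_of_augmentation hG1 hI' h2 (fun u v h n2 n1 => (hE u v h n1 n2).symm) hu hv,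
      fun _ _ => ⟨rfl, rfl⟩⟩

/-- Two graphs sharing `I = V1 ∩ V2` are simultaneous interval graphs iff one can
add edges, each joining a vertex of `V1 − I` to a vertex of `V2 − I`, so that the
union becomes an interval graph on `V1 ∪ V2`. -/
theorem simultaneous_iff_augmentation {U : Type*} [Fintype U] [DecidableEq U]
    (V1 V2 : Finset U) (G1 G2 : SimpleGraph U)
    (hG1 : ∀ u v : U, G1.Adj u v → u ∈ V1 ∧ v ∈ V1)
    (hG2 : ∀ u v : U, G2.Adj u v → u ∈ V2 ∧ v ∈ V2)
    (hI : ∀ u ∈ V1 ∩ V2, ∀ v ∈ V1 ∩ V2, G1.Adj u v ↔ G2.Adj u v) :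
    SimultaneousIntervalGraphs V1 V2 G1 G2 ↔
      ∃ G : SimpleGraph U,
        (∀ u v : U, G1.Adj u v → G.Adj u v) ∧
        (∀ u v : U, G2.Adj u v → G.Adj u v) ∧
        (∀ u v : U, G.Adj u v → ¬ G1.Adj u v → ¬ G2.Adj u v →
          (u ∈ V1 \ V2 ∧ v ∈ V2 \ V1) ∨ (u ∈ V2 \ V1 ∧ v ∈ V1 \ V2)) ∧
        IsIntervalGraphOn G (V1 ∪ V2) :=
  simultaneous_iff_augmentation_general V1 V2 G1 G2 hG1 hG2 hI
end

section
/- Let G_1 and G_2 be interval graphs sharing the vertex set I = V(G_1) ∩ V(G_2) and the edges induced by I, and let j ∈ {1,2}. If an I-ordering I is G_j-expandable, then every extension of I (obtained by subclique insertions in G_1[I]) is also a G_j-expandable I-ordering. -/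
variable {U : Type*}

section InsertAux
variable {α : Type*}

lemma aux_len (S : List α) (Q : α) {i : ℕ} (hi : i ≤ S.length) :
    (S.take i ++ Q :: S.drop i).length = S.length + 1 := by
  simp [List.length_take]; omega

lemma aux_getD_lt (S : List α) (Q d : α) {i j : ℕ} (hj : j < i) (hi : i ≤ S.length) :
    (S.take i ++ Q :: S.drop i).getD j d = S.getD j d := by
  rw [List.getD_eq_getElem?_getD, List.getD_eq_getElem?_getD, List.getElem?_append,
    List.getElem?_take]
  simp [List.length_take, hj, Nat.lt_min.mpr ⟨hj, lt_of_lt_of_le hj hi⟩]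

lemma aux_getD_eq (S : List α) (Q d : α) {i : ℕ} (hi : i ≤ S.length) :
    (S.take i ++ Q :: S.drop i).getD i d = Q := by
  rw [List.getD_eq_getElem?_getD, List.getElem?_append]
  simp [List.length_take, Nat.min_eq_left hi]

lemma aux_getD_gt (S : List α) (Q d : α) {i j : ℕ} (hj : i < j) (hi : i ≤ S.length) :
    (S.take i ++ Q :: S.drop i).getD j d = S.getD (j-1) d := by
  rw [List.getD_eq_getElem?_getD, List.getD_eq_getElem?_getD, List.getElem?_append]
  have h1 : (S.take i).length = i := by simp [List.length_take, Nat.min_eq_left hi]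
  rw [h1]
  have hni : ¬ j < i := by omega
  simp only [hni, if_false]
  have : j - i = (j - i - 1) + 1 := by omega
  rw [this, List.getElem?_cons_succ, List.getElem?_drop]
  congr 2
  omega

lemma aux_mem_insert {S : List α} {Q x : α} {i : ℕ} (hx : x ∈ S) :
    x ∈ S.take i ++ Q :: S.drop i := by
  rw [← List.take_append_drop i S, List.mem_append] at hx
  rcases hx with h | h
  · exact List.mem_append.mpr (Or.inl h)
  · exact List.mem_append.mpr (Or.inr (List.mem_cons_of_mem _ h))

lemma aux_mem_of_insert {S : List α} {Q x : α} {i : ℕ}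
    (hx : x ∈ S.take i ++ Q :: S.drop i) : x = Q ∨ x ∈ S := by
  rw [List.mem_append, List.mem_cons] at hx
  rcases hx with h | h | h
  · exact Or.inr (List.mem_of_mem_take h)
  · exact Or.inl h
  · exact Or.inr (List.mem_of_mem_drop h)

end InsertAux


/-- Subclique insertion for clique orderings of `G[W]`. -/
def SubcliqueInsertionOn [DecidableEq U] (G : SimpleGraph U) (W : Finset U)
    (S S' : List (Finset U)) : Prop :=
  ∃ (i : ℕ) (Q' : Finset U), i ≤ S.length ∧ Q' ⊆ W ∧ G.IsClique (Q' : Set U) ∧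
    S' = S.take i ++ Q' :: S.drop i ∧
    (if i = 0 then (∅ : Finset U) else S.getD (i - 1) ∅) ∩ S.getD i ∅ ⊆ Q' ∧
    (Q' ⊆ (if i = 0 then (∅ : Finset U) else S.getD (i - 1) ∅) ∨ Q' ⊆ S.getD i ∅)

/-- Extension by a finite sequence of subclique insertions. -/
def IsExtensionOn [DecidableEq U] (G : SimpleGraph U) (W : Finset U)
    (S S' : List (Finset U)) : Prop :=
  Relation.ReflTransGen (SubcliqueInsertionOn G W) S S'

/-- Two orderings are compatible if both (separately) extend to a common ordering. -/
def CompatibleOn [DecidableEq U] (G : SimpleGraph U) (W : Finset U)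
    (S1 S2 : List (Finset U)) : Prop :=
  ∃ T : List (Finset U), IsExtensionOn G W S1 T ∧ IsExtensionOn G W S2 T

/-- The `I`-ordering `X` is expandable to a clique ordering of `G[W]`:
there is a clique ordering of `G[W]` of the same length that contains it
position-wise. -/
def Expandable [DecidableEq U] (G : SimpleGraph U) (W : Finset U)
    (X : List (Finset U)) : Prop :=
  ∃ O : List (Finset U), IsCliqueOrderingOn G W O ∧ O.length = X.length ∧
    ∀ i : ℕ, i < X.length → X.getD i ∅ ⊆ O.getD i ∅

lemma mem_getD_lt {S : List (Finset U)} {v : U} {k : ℕ} (h : v ∈ S.getD k ∅) :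
    k < S.length := by
  by_contra hk
  rw [List.getD_eq_default _ _ (le_of_not_gt hk)] at h
  exact absurd h (Finset.notMem_empty v)

/-- A subclique insertion into a clique ordering yields a clique ordering. -/
lemma cliqueOrdering_insert [DecidableEq U] {G : SimpleGraph U} {W : Finset U}
    {S S' : List (Finset U)} (hS : IsCliqueOrderingOn G W S)
    (h : SubcliqueInsertionOn G W S S') : IsCliqueOrderingOn G W S' := by
  obtain ⟨i, Q', hi, hQW, hQc, rfl, hsub, hside⟩ := h
  obtain ⟨hall, hmax, hcon⟩ := hS
  refine ⟨?_, ?_, ?_⟩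
  · intro Q hQ
    rcases aux_mem_of_insert hQ with rfl | hQ
    · exact ⟨hQW, hQc⟩
    · exact hall Q hQ
  · intro Q hQ
    exact aux_mem_insert (hmax Q hQ)
  · intro v a b c hab hbc hclen hva hvc
    rcases lt_trichotomy b i with hb | rfl | hb
    · -- b < i : goal is v ∈ S.getD b
      rw [aux_getD_lt S Q' ∅ hb hi]
      have ha : a < i := lt_of_le_of_lt hab hb
      rw [aux_getD_lt S Q' ∅ ha hi] at hva
      rcases lt_trichotomy c i with hc | rfl | hc
      · rw [aux_getD_lt S Q' ∅ hc hi] at hvc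
        exact hcon v a b c hab hbc (mem_getD_lt hvc) hva hvc
      · rw [aux_getD_eq S Q' ∅ hi] at hvc
        rcases hside with hP | hN
        · have hc0 : c ≠ 0 := by omega
          rw [if_neg hc0] at hP
          have hvm : v ∈ S.getD (c - 1) ∅ := hP hvc
          exact hcon v a b (c-1) hab (by omega) (mem_getD_lt hvm) hva hvm
        · have hvm : v ∈ S.getD c ∅ := hN hvc
          exact hcon v a b c hab (by omega) (mem_getD_lt hvm) hva hvm
      · rw [aux_getD_gt S Q' ∅ hc hi] at hvc
        exact hcon v a b (c-1) hab (by omega) (mem_getD_lt hvc) hva hvc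
    · -- b = i : goal is v ∈ Q'
      rw [aux_getD_eq S Q' ∅ hi]
      rcases eq_or_lt_of_le hab with rfl | ha
      · rwa [aux_getD_eq S Q' ∅ hi] at hva
      rcases eq_or_lt_of_le hbc with rfl | hc
      · rwa [aux_getD_eq S Q' ∅ hi] at hvc
      -- a < b = i < c
      rw [aux_getD_lt S Q' ∅ ha hi] at hva
      rw [aux_getD_gt S Q' ∅ hc hi] at hvc
      have hclen' : c - 1 < S.length := mem_getD_lt hvc
      have h1 : v ∈ S.getD (b - 1) ∅ :=
        hcon v a (b-1) (c-1) (by omega) (by omega) hclen' hva hvc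
      have h2 : v ∈ S.getD b ∅ :=
        hcon v a b (c-1) (by omega) (by omega) hclen' hva hvc
      apply hsub
      rw [if_neg (by omega : ¬ b = 0)]
      exact Finset.mem_inter.mpr ⟨h1, h2⟩
    · -- i < b
      rw [aux_getD_gt S Q' ∅ hb hi]
      have hc : i < c := lt_of_lt_of_le hb hbc
      rw [aux_getD_gt S Q' ∅ hc hi] at hvc
      have hclen' : c - 1 < S.length := mem_getD_lt hvc
      rcases lt_trichotomy a i with ha | rfl | ha
      · rw [aux_getD_lt S Q' ∅ ha hi] at hva
        exact hcon v a (b-1) (c-1) (by omega) (by omega) hclen' hva hvc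
      · rw [aux_getD_eq S Q' ∅ hi] at hva
        rcases hside with hP | hN
        · have ha0 : a ≠ 0 := by
            intro h0
            subst h0
            rw [if_pos rfl] at hP
            exact absurd (hP hva) (Finset.notMem_empty v)
          rw [if_neg ha0] at hP
          exact hcon v (a-1) (b-1) (c-1) (by omega) (by omega) hclen' (hP hva) hvc
        · exact hcon v a (b-1) (c-1) (by omega) (by omega) hclen' (hN hva) hvc
      · rw [aux_getD_gt S Q' ∅ ha hi] at hva
        exact hcon v (a-1) (b-1) (c-1) (by omega) (by omega) hclen' hva hvc

/-- Expandability is preserved under a subclique insertion (in the induced graph). -/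
lemma expandable_insert [DecidableEq U] {G1 G : SimpleGraph U} {I W : Finset U}
    (hIW : I ⊆ W) {X X' : List (Finset U)} (h : SubcliqueInsertionOn G1 I X X')
    (hexp : Expandable G W X) : Expandable G W X' := by
  obtain ⟨i, Q', hi, hQI, hQc, rfl, hsub, hside⟩ := h
  obtain ⟨O, hO, hlen, hcont⟩ := hexp
  have hXO : ∀ k, X.getD k ∅ ⊆ O.getD k ∅ := by
    intro k
    rcases lt_or_ge k X.length with hk | hk
    · exact hcont k hk
    · rw [List.getD_eq_default _ _ hk]
      exact Finset.empty_subset _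
  have hiO : i ≤ O.length := hlen ▸ hi
  set P : Finset U := if i = 0 then (∅ : Finset U) else O.getD (i - 1) ∅ with hP
  set N : Finset U := O.getD i ∅ with hN
  have hOgetD : ∀ k, O.getD k ∅ ⊆ W ∧ G.IsClique ((O.getD k ∅ : Finset U) : Set U) := by
    intro k
    rcases lt_or_ge k O.length with hk | hk
    · rw [List.getD_eq_getElem _ _ hk]
      exact hO.1 _ (List.getElem_mem hk)
    · rw [List.getD_eq_default _ _ hk]
      simp [SimpleGraph.isClique_empty]
  have hPprop : P ⊆ W ∧ G.IsClique (P : Set U) := by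
    rw [hP]
    split
    · simp [SimpleGraph.isClique_empty]
    · exact hOgetD (i-1)
  set Q'' : Finset U := (P ∩ N) ∪ Q' with hQ''
  have hQ'P_or_N : Q'' ⊆ P ∨ Q'' ⊆ N := by
    rcases hside with hs | hs
    · left
      apply Finset.union_subset (Finset.inter_subset_left)
      refine hs.trans ?_
      rw [hP]
      split
      · exact subset_refl _
      · exact hXO (i-1)
    · right
      exact Finset.union_subset (Finset.inter_subset_right) (hs.trans (hXO i))
  have hQ''W : Q'' ⊆ W := Finset.union_subset
    ((Finset.inter_subset_left).trans hPprop.1) (hQI.trans hIW)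
  have hQ''c : G.IsClique (Q'' : Set U) := by
    rcases hQ'P_or_N with hs | hs
    · exact hPprop.2.subset (by exact_mod_cast hs)
    · exact (hOgetD i).2.subset (by exact_mod_cast hs)
  refine ⟨O.take i ++ Q'' :: O.drop i, ?_, ?_, ?_⟩
  · apply cliqueOrdering_insert hO
    exact ⟨i, Q'', hiO, hQ''W, hQ''c, rfl, Finset.subset_union_left, hQ'P_or_N⟩
  · rw [aux_len O Q'' hiO, aux_len X Q' hi, hlen]
  · intro k hk
    rw [aux_len X Q' hi] at hk
    rcases lt_trichotomy k i with hki | rfl | hki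
    · rw [aux_getD_lt X Q' ∅ hki hi, aux_getD_lt O Q'' ∅ hki hiO]
      exact hXO k
    · rw [aux_getD_eq X Q' ∅ hi, aux_getD_eq O Q'' ∅ hiO]
      exact Finset.subset_union_right
    · rw [aux_getD_gt X Q' ∅ hki hi, aux_getD_gt O Q'' ∅ hki hiO]
      exact hXO (k-1)


/-- If an `I`-ordering is `G_j`-expandable (for `j ∈ {1,2}`), then every
extension of it (by subclique insertions in `G1[I]`) is again a `G_j`-expandable
`I`-ordering. -/
theorem expandable_of_extension {U : Type*} [Fintype U] [DecidableEq U]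
    (V1 V2 : Finset U) (G1 G2 : SimpleGraph U)
    (hG1 : ∀ u v : U, G1.Adj u v → u ∈ V1 ∧ v ∈ V1)
    (hG2 : ∀ u v : U, G2.Adj u v → u ∈ V2 ∧ v ∈ V2)
    (hI : ∀ u ∈ V1 ∩ V2, ∀ v ∈ V1 ∩ V2, G1.Adj u v ↔ G2.Adj u v)
    (hint1 : IsIntervalGraphOn G1 V1) (hint2 : IsIntervalGraphOn G2 V2)
    (X X' : List (Finset U))
    (hX : IsCliqueOrderingOn G1 (V1 ∩ V2) X)
    (hext : IsExtensionOn G1 (V1 ∩ V2) X X') :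
    IsCliqueOrderingOn G1 (V1 ∩ V2) X' ∧
    (Expandable G1 V1 X → Expandable G1 V1 X') ∧
    (Expandable G2 V2 X → Expandable G2 V2 X') := by
  induction hext with
  | refl => exact ⟨hX, fun h => h, fun h => h⟩
  | tail _ hstep ih =>
    refine ⟨cliqueOrdering_insert ih.1 hstep, ?_, ?_⟩
    · intro h
      exact expandable_insert Finset.inter_subset_left hstep (ih.2.1 h)
    · intro h
      exact expandable_insert Finset.inter_subset_right hstep (ih.2.2 h)
end

section
/- Let H be a finite simple graph and let S be a clique ordering of H. Let S' be the clique ordering obtained from S by replacing every maximal run of equal consecutive cliques by a single copy of that clique (i.e., eliminating all consecutive duplicates). Then S is equivalent to S'. -/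
/-!
Duplicating an entry of a list of cliques is itself a subclique insertion, so the destuttered
ordering extends to `S`; this gives one direction. For the other, duplications commute with
subclique insertions: if `S` arises from its destuttering by duplications and the destuttering
extends to `T`, then `S` extends to the list obtained from `T` by the corresponding duplications,
which is again an extension of `T`.
-/

variable {V : Type*}

/-- `S'` is obtained from `S` by inserting a clique `Q'` of `G` between
positions `i` and `i+1` (with the out-of-range cliques taken to be empty),
where `Q'` contains the intersection of its two neighbours and is contained
in one of them. -/
def SubcliqueInsertion [DecidableEq V] (G : SimpleGraph V)
    (S S' : List (Finset V)) : Prop :=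
  ∃ (i : ℕ) (Q' : Finset V), i ≤ S.length ∧ G.IsClique (Q' : Set V) ∧
    S' = S.take i ++ Q' :: S.drop i ∧
    (if i = 0 then (∅ : Finset V) else S.getD (i - 1) ∅) ∩ S.getD i ∅ ⊆ Q' ∧
    (Q' ⊆ (if i = 0 then (∅ : Finset V) else S.getD (i - 1) ∅) ∨ Q' ⊆ S.getD i ∅)

/-- `S'` is an extension of `S`: it is obtained from `S` by a finite sequence of
subclique insertions. -/
def IsExtension [DecidableEq V] (G : SimpleGraph V) (S S' : List (Finset V)) : Prop :=
  Relation.ReflTransGen (SubcliqueInsertion G) S S'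

/-- Two clique orderings are compatible if they both (separately) extend to a
common ordering. -/
def Compatible [DecidableEq V] (G : SimpleGraph V) (S1 S2 : List (Finset V)) : Prop :=
  ∃ T : List (Finset V), IsExtension G S1 T ∧ IsExtension G S2 T

namespace List

variable {α : Type*}

theorem getLastD_take (l : List α) (d : α) {i : ℕ} (hi : i ≤ l.length) :
    (l.take i).getLastD d = if i = 0 then d else l.getD (i - 1) d := by
  rcases Nat.eq_zero_or_pos i with rfl | hpos
  · simp
  · have : l[i - 1]?.isSome := by simp only [isSome_getElem?]; omega
    simp only [getLastD_eq_getLast?, getLast?_take, getD_eq_getElem?_getD, if_neg hpos.ne']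
    rw [Option.or_of_isSome this]

theorem headD_drop (l : List α) (d : α) (i : ℕ) : (l.drop i).headD d = l.getD i d := by
  rw [headD_eq_head?_getD, head?_drop, getD_eq_getElem?_getD]

theorem getLastD_append_cons_cons (L M : List α) (x d : α) :
    (L ++ x :: x :: M).getLastD d = (L ++ x :: M).getLastD d := by
  simp [getLastD_eq_getLast?, getLast?_append]

theorem headD_append_cons_cons (M R : List α) (x d : α) :
    (M ++ x :: x :: R).headD d = (M ++ x :: R).headD d := by
  cases M <;> rfl

end List

theorem subcliqueInsertion_iff [DecidableEq V] {G : SimpleGraph V} {A B : List (Finset V)} :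
    SubcliqueInsertion G A B ↔ ∃ (L R : List (Finset V)) (Q : Finset V),
      A = L ++ R ∧ B = L ++ Q :: R ∧ G.IsClique (Q : Set V) ∧
      L.getLastD ∅ ∩ R.headD ∅ ⊆ Q ∧ (Q ⊆ L.getLastD ∅ ∨ Q ⊆ R.headD ∅) := by
  constructor
  · rintro ⟨i, Q, hi, hQ, rfl, hinter, hsub⟩
    refine ⟨A.take i, A.drop i, Q, (A.take_append_drop i).symm, rfl, hQ, ?_⟩
    rw [A.getLastD_take ∅ hi, A.headD_drop]
    exact ⟨hinter, hsub⟩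
  · rintro ⟨L, R, Q, rfl, rfl, hQ, hinter, hsub⟩
    have hleft : (if L.length = 0 then ∅ else (L ++ R).getD (L.length - 1) ∅) = L.getLastD ∅ := by
      rw [← (L ++ R).getLastD_take ∅ (by simp), List.take_left]
    have hright : (L ++ R).getD L.length ∅ = R.headD ∅ := by
      rw [← List.headD_drop, List.drop_left]
    refine ⟨L.length, Q, by simp, hQ, by simp, ?_⟩
    rw [hleft, hright]
    exact ⟨hinter, hsub⟩

section DupStep

variable {α : Type*}

def DupStep (A B : List α) : Prop :=
  ∃ (L : List α) (x : α) (R : List α), A = L ++ x :: R ∧ B = L ++ x :: x :: R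

theorem DupStep.subset {A B : List α} (h : DupStep A B) : B ⊆ A := by
  obtain ⟨L, x, R, rfl, rfl⟩ := h
  intro Q hQ
  simp only [List.mem_append, List.mem_cons] at hQ ⊢
  tauto

theorem DupStep.cons {A B : List α} (x : α) (h : DupStep A B) : DupStep (x :: A) (x :: B) := by
  obtain ⟨L, y, R, rfl, rfl⟩ := h
  exact ⟨x :: L, y, R, rfl, rfl⟩

theorem reflTransGen_dupStep_destutter' [DecidableEq α] (l : List α) (a : α) :
    Relation.ReflTransGen DupStep (l.destutter' (· ≠ ·) a) (a :: l) := by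
  induction l generalizing a with
  | nil => exact .refl
  | cons b l ih =>
    rw [List.destutter'_cons]
    split_ifs with hab
    · exact Relation.ReflTransGen.lift _ (fun _ _ h => h.cons a) _ _ (ih b)
    · obtain rfl : a = b := not_ne_iff.mp hab
      exact (ih a).tail ⟨[], a, l, rfl, rfl⟩

theorem reflTransGen_dupStep_destutter [DecidableEq α] (l : List α) :
    Relation.ReflTransGen DupStep (l.destutter (· ≠ ·)) l := by
  cases l with
  | nil => exact .refl
  | cons a l => exact reflTransGen_dupStep_destutter' l a

end DupStep

section Cliques

variable [DecidableEq V] {G : SimpleGraph V} {A B : List (Finset V)}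

theorem SubcliqueInsertion.forall_isClique (h : SubcliqueInsertion G A B)
    (hA : ∀ Q ∈ A, G.IsClique (Q : Set V)) : ∀ Q ∈ B, G.IsClique (Q : Set V) := by
  obtain ⟨L, R, Q', rfl, rfl, hQ', -, -⟩ := subcliqueInsertion_iff.mp h
  intro Q hQ
  simp only [List.mem_append, List.mem_cons] at hQ hA
  rcases hQ with hQ | rfl | hQ
  exacts [hA Q (.inl hQ), hQ', hA Q (.inr hQ)]

theorem IsExtension.forall_isClique (h : IsExtension G A B)
    (hA : ∀ Q ∈ A, G.IsClique (Q : Set V)) : ∀ Q ∈ B, G.IsClique (Q : Set V) := by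
  induction h with
  | refl => exact hA
  | tail _ hins ih => exact hins.forall_isClique ih

theorem DupStep.subcliqueInsertion (h : DupStep A B) (hA : ∀ Q ∈ A, G.IsClique (Q : Set V)) :
    SubcliqueInsertion G A B := by
  obtain ⟨L, x, R, rfl, rfl⟩ := h
  refine subcliqueInsertion_iff.mpr ⟨L, x :: R, x, rfl, rfl, hA x (by simp), ?_, .inr ?_⟩
  · exact Finset.inter_subset_right
  · exact subset_rfl

theorem isExtension_of_reflTransGen_dupStep (h : Relation.ReflTransGen DupStep A B)
    (hA : ∀ Q ∈ A, G.IsClique (Q : Set V)) : IsExtension G A B := by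
  induction h using Relation.ReflTransGen.head_induction_on with
  | refl => exact .refl
  | head hstep _ ih =>
    exact .head (hstep.subcliqueInsertion hA) (ih fun Q hQ => hA Q (hstep.subset hQ))

theorem SubcliqueInsertion.exists_dupStep {A' : List (Finset V)} (hins : SubcliqueInsertion G A B)
    (hdup : DupStep A A') : ∃ B', DupStep B B' ∧ SubcliqueInsertion G A' B' := by
  obtain ⟨L, R, Q, rfl, rfl, hQ, hinter, hsub⟩ := subcliqueInsertion_iff.mp hins
  obtain ⟨L₀, x, R₀, hsplit, rfl⟩ := hdup
  -- the duplicated entry lies to the right of the insertion point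
  have right (M : List (Finset V)) (hL₀ : L₀ = L ++ M) (hR : R = M ++ x :: R₀) :
      ∃ B', DupStep (L ++ Q :: R) B' ∧ SubcliqueInsertion G (L₀ ++ x :: x :: R₀) B' := by
    subst hL₀ hR
    refine ⟨L ++ Q :: (M ++ x :: x :: R₀), ⟨L ++ Q :: M, x, R₀, by simp, by simp⟩, ?_⟩
    refine subcliqueInsertion_iff.mpr ⟨L, M ++ x :: x :: R₀, Q, by simp, rfl, hQ, ?_⟩
    rw [List.headD_append_cons_cons]
    exact ⟨hinter, hsub⟩
  rcases List.append_eq_append_iff.mp hsplit with ⟨M, hL₀, hR⟩ | ⟨_ | ⟨y, M⟩, hL, hR⟩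
  · exact right M hL₀ hR
  · exact right [] (by simpa using hL.symm) (by simpa using hR.symm)
  · obtain ⟨rfl, rfl⟩ := List.cons_eq_cons.mp hR
    subst hL
    refine ⟨L₀ ++ x :: x :: M ++ Q :: R, ⟨L₀, x, M ++ Q :: R, by simp, by simp⟩, ?_⟩
    refine subcliqueInsertion_iff.mpr ⟨L₀ ++ x :: x :: M, R, Q, by simp, rfl, hQ, ?_⟩
    rw [List.getLastD_append_cons_cons]
    exact ⟨hinter, hsub⟩

theorem IsExtension.exists_dupStep {A' : List (Finset V)} (hext : IsExtension G A B)
    (hdup : DupStep A A') : ∃ B', DupStep B B' ∧ IsExtension G A' B' := by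
  induction hext using Relation.ReflTransGen.head_induction_on generalizing A' with
  | refl => exact ⟨A', hdup, .refl⟩
  | head hins _ ih =>
    obtain ⟨C', hC', hins'⟩ := hins.exists_dupStep hdup
    obtain ⟨B', hB', hext'⟩ := ih hC'
    exact ⟨B', hB', hext'.head hins'⟩

theorem IsExtension.exists_reflTransGen_dupStep {A' : List (Finset V)} (hext : IsExtension G A B)
    (hdup : Relation.ReflTransGen DupStep A A') :
    ∃ B', Relation.ReflTransGen DupStep B B' ∧ IsExtension G A' B' := by
  induction hdup generalizing B with
  | refl => exact ⟨B, .refl, hext⟩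
  | tail _ hstep ih =>
    obtain ⟨C, hBC, hext'⟩ := ih hext
    obtain ⟨B', hCB', hext''⟩ := hext'.exists_dupStep hstep
    exact ⟨B', hBC.tail hCB', hext''⟩

end Cliques

theorem equivalent_of_destutter_general {V : Type*} [DecidableEq V]
    (H : SimpleGraph V) (S : List (Finset V)) (hS : IsCliqueOrdering H S) :
    ∀ S'' : List (Finset V), IsCliqueOrdering H S'' →
      (Compatible H S S'' ↔ Compatible H (S.destutter (· ≠ ·)) S'') := by
  intro S'' _
  have hdup : Relation.ReflTransGen DupStep (S.destutter (· ≠ ·)) S :=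
    reflTransGen_dupStep_destutter S
  have hcliques : ∀ Q ∈ S.destutter (· ≠ ·), H.IsClique (Q : Set V) := fun Q hQ =>
    hS.1 Q ((List.destutter_sublist _ _).subset hQ)
  have hext : IsExtension H (S.destutter (· ≠ ·)) S :=
    isExtension_of_reflTransGen_dupStep hdup hcliques
  constructor
  · rintro ⟨T, hST, hT⟩
    exact ⟨T, hext.trans hST, hT⟩
  · rintro ⟨T, hDT, hT⟩
    obtain ⟨T', hTT', hST'⟩ := hDT.exists_reflTransGen_dupStep hdup
    have hTT'ext : IsExtension H T T' :=
      isExtension_of_reflTransGen_dupStep hTT' (hDT.forall_isClique hcliques)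
    exact ⟨T', hST', hT.trans hTT'ext⟩

/-- Eliminating all consecutive duplicates from a clique ordering yields an
equivalent ordering: it is compatible with exactly the same clique orderings. -/
theorem equivalent_of_destutter {V : Type*} [Fintype V] [DecidableEq V]
    (H : SimpleGraph V) (S : List (Finset V)) (hS : IsCliqueOrdering H S) :
    ∀ S'' : List (Finset V), IsCliqueOrdering H S'' →
      (Compatible H S S'' ↔ Compatible H (S.destutter (· ≠ ·)) S'') :=
  equivalent_of_destutter_general H S hS
end

section
/- The compatibility relation on clique orderings is not transitive: there exist a finite simple graph H and clique orderings S_1, S_2, S_3 of H such that S_1 is compatible with S_2 and S_2 is compatible with S_3, but S_1 is not compatible with S_3. -/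
variable {V : Type*}

/- ### Auxiliary lemmas -/

lemma getD_insert_aux {α : Type*} (d : α) (S : List α) (Q : α) (k : ℕ)
    (hk : k ≤ S.length) (j : ℕ) :
    (S.take k ++ Q :: S.drop k).getD j d =
      if j < k then S.getD j d else if j = k then Q else S.getD (j-1) d := by
  have hlt : (S.take k).length = k := by simp [Nat.min_eq_left hk]
  rcases lt_trichotomy j k with h|h|h
  · rw [if_pos h, List.getD_append _ _ _ _ (by omega)]
    rw [List.getD_eq_getElem _ _ (by omega), List.getD_eq_getElem _ _ (by omega)]
    simp [List.getElem_take]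
  · subst h
    rw [if_neg (lt_irrefl _), if_pos rfl, List.getD_append_right _ _ _ _ (by omega)]
    simp [hlt]
  · rw [if_neg (by omega), if_neg (by omega), List.getD_append_right _ _ _ _ (by omega), hlt]
    have h1 : j - k = (j - k - 1) + 1 := by omega
    rw [h1, List.getD_cons_succ]
    rcases le_or_gt S.length (j - 1) with h2 | h2
    · rw [List.getD_eq_default _ _ (by simp; omega), List.getD_eq_default _ _ (by omega)]
    · rw [List.getD_eq_getElem _ _ (by simp; omega), List.getD_eq_getElem _ _ h2]
      simp only [List.getElem_drop]
      congr 1; omega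

/-- `v` appears in some clique strictly before every appearance of `w`. -/
def Prec (v w : V) (S : List (Finset V)) : Prop :=
  ∃ i, i < S.length ∧ v ∈ S.getD i ∅ ∧ ∀ j ≤ i, w ∉ S.getD j ∅

lemma prec_of_insertion [DecidableEq V] {G : SimpleGraph V} {S S' : List (Finset V)}
    (h : SubcliqueInsertion G S S') {v w : V} (hA : Prec v w S) : Prec v w S' := by
  obtain ⟨k, Q', hk, -, hS', hint, hsub⟩ := h
  obtain ⟨i, hi, hv, hw⟩ := hA
  have hlen : S'.length = S.length + 1 := by subst hS'; simp; omega
  have hget : ∀ j, S'.getD j ∅ =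
      if j < k then S.getD j ∅ else if j = k then Q' else S.getD (j-1) ∅ := by
    intro j; rw [hS']; exact getD_insert_aux ∅ S Q' k hk j
  rcases le_or_gt k i with hki | hki
  · -- the insertion happened at or before the witness: shift the witness by one
    have hwQ : w ∉ Q' := by
      rcases hsub with hs | hs
      · intro hwq
        have := hs hwq
        by_cases h0 : k = 0
        · simp [h0] at this
        · rw [if_neg h0] at this
          exact hw (k-1) (by omega) this
      · intro hwq; exact hw k hki (hs hwq)
    refine ⟨i + 1, by omega, ?_, ?_⟩
    · rw [hget]; rw [if_neg (by omega), if_neg (by omega)]; simpa using hv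
    · intro j hj
      rw [hget]
      split
      · exact hw j (by omega)
      · split
        · next h1 h2 => exact hwQ
        · next h1 h2 => exact hw (j-1) (by omega)
  · -- the insertion happened after the witness
    refine ⟨i, by omega, ?_, ?_⟩
    · rw [hget, if_pos hki]; exact hv
    · intro j hj
      rw [hget, if_pos (by omega)]
      exact hw j hj

lemma prec_of_ext [DecidableEq V] {G : SimpleGraph V} {S T : List (Finset V)}
    (h : IsExtension G S T) {v w : V} (hA : Prec v w S) : Prec v w T := by
  induction h with
  | refl => exact hA
  | tail _ hst ih => exact prec_of_insertion hst ih

lemma prec_asymm {v w : V} {T : List (Finset V)} (h1 : Prec v w T) (h2 : Prec w v T) :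
    False := by
  obtain ⟨i, hi, hv, hw⟩ := h1
  obtain ⟨i', hi', hv', hw'⟩ := h2
  rcases le_total i i' with h | h
  · exact hw' i h hv
  · exact hw i' h hv'

lemma top_isClique (s : Set V) : (⊤ : SimpleGraph V).IsClique s :=
  fun _ _ _ _ h => h

lemma max_clique_top [Fintype V] [DecidableEq V] {Q : Finset V}
    (h : IsMaxClique (⊤ : SimpleGraph V) Q) : Q = Finset.univ :=
  h.2 Finset.univ (top_isClique _) (Finset.subset_univ Q)

/-- The compatibility relation on clique orderings is not transitive. -/
theorem compatible_not_transitive :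
    ∃ (n : ℕ) (H : SimpleGraph (Fin n)) (S1 S2 S3 : List (Finset (Fin n))),
      IsCliqueOrdering H S1 ∧ IsCliqueOrdering H S2 ∧ IsCliqueOrdering H S3 ∧
      Compatible H S1 S2 ∧ Compatible H S2 S3 ∧ ¬ Compatible H S1 S3 := by
  refine ⟨2, ⊤, [{0}, {0, 1}, {1}], [{0, 1}], [{1}, {0, 1}, {0}], ?_, ?_, ?_, ?_, ?_, ?_⟩
  · refine ⟨fun Q _ => top_isClique _, fun Q hQ => ?_, ?_⟩
    · rw [max_clique_top hQ]
      have : (Finset.univ : Finset (Fin 2)) = {0, 1} := by decide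
      rw [this]; simp
    · intro v i j k hij hjk hk hi' hk'
      simp only [List.length_cons, List.length_nil] at hk
      interval_cases k <;> interval_cases j <;> interval_cases i <;>
        fin_cases v <;> revert hi' hk' <;> decide
  · refine ⟨fun Q _ => top_isClique _, fun Q hQ => ?_, ?_⟩
    · rw [max_clique_top hQ]
      have : (Finset.univ : Finset (Fin 2)) = {0, 1} := by decide
      rw [this]; simp
    · intro v i j k hij hjk hk hi' hk'
      simp only [List.length_cons, List.length_nil] at hk
      interval_cases k <;> interval_cases j <;> interval_cases i <;>
        fin_cases v <;> revert hi' hk' <;> decide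
  · refine ⟨fun Q _ => top_isClique _, fun Q hQ => ?_, ?_⟩
    · rw [max_clique_top hQ]
      have : (Finset.univ : Finset (Fin 2)) = {0, 1} := by decide
      rw [this]; simp
    · intro v i j k hij hjk hk hi' hk'
      simp only [List.length_cons, List.length_nil] at hk
      interval_cases k <;> interval_cases j <;> interval_cases i <;>
        fin_cases v <;> revert hi' hk' <;> decide
  · -- Compatible S1 S2 : S1 extends S2
    refine ⟨[{0}, {0, 1}, {1}], Relation.ReflTransGen.refl, ?_⟩
    refine Relation.ReflTransGen.head (b := [{0}, {0, 1}]) ?_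
      (Relation.ReflTransGen.single ?_)
    · exact ⟨0, {0}, by simp, top_isClique _, by decide, by decide, by decide⟩
    · exact ⟨2, {1}, by simp, top_isClique _, by decide, by decide, by decide⟩
  · -- Compatible S2 S3 : S3 extends S2
    refine ⟨[{1}, {0, 1}, {0}], ?_, Relation.ReflTransGen.refl⟩
    refine Relation.ReflTransGen.head (b := [{1}, {0, 1}]) ?_
      (Relation.ReflTransGen.single ?_)
    · exact ⟨0, {1}, by simp, top_isClique _, by decide, by decide, by decide⟩
    · exact ⟨2, {0}, by simp, top_isClique _, by decide, by decide, by decide⟩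
  · rintro ⟨T, h1, h3⟩
    have p1 : Prec (0 : Fin 2) 1 [{0}, {0, 1}, {1}] := by
      refine ⟨0, by simp, by decide, ?_⟩
      intro j hj
      interval_cases j
      decide
    have p3 : Prec (1 : Fin 2) 0 [{1}, {0, 1}, {0}] := by
      refine ⟨0, by simp, by decide, ?_⟩
      intro j hj
      interval_cases j
      decide
    exact prec_asymm (prec_of_ext h1 p1) (prec_of_ext h3 p3)
end
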